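/- For every integer ℓ ≥ 1, if uv is an edge of G_ℓ with τ(u) > τ(v), then uv is a tree edge and τ(u) = τ(v) + 1; if in addition depth(v) ≥ depth(u), then π(u) is a source and u is a vertex of the clique K^{π(u)}. -/

import Mathlib

namespace PaperDefs

/-- `v : Fin n → V` is a path of order `n` in `G`: distinct vertices,
consecutive ones adjacent. -/
def IsPathSeq {V : Type*} (G : SimpleGraph V) {n : ℕ} (v : Fin n → V) : Prop :=
  Function.Injective v ∧ ∀ i j : Fin n, (j : ℕ) = (i : ℕ) + 1 → G.Adj (v i) (v j)

/-- `v : Fin n → V` is an induced path of order `n` in `G`: a path with no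
edge between vertices at distance ≥ 2 along the path. -/
def IsInducedPathSeq {V : Type*} (G : SimpleGraph V) {n : ℕ} (v : Fin n → V) : Prop :=
  IsPathSeq G v ∧ ∀ i j : Fin n, (i : ℕ) + 1 < (j : ℕ) → ¬ G.Adj (v i) (v j)

/-- `G` is `k`-degenerate: every nonempty (induced) subgraph has a vertex of
degree at most `k`. -/
def KDeg {V : Type*} (G : SimpleGraph V) (k : ℕ) : Prop :=
  ∀ s : Set V, s.Nonempty → ∃ v ∈ s, {u | u ∈ s ∧ G.Adj v u}.ncard ≤ k

/-- `G` has a Hamiltonian path. -/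
def HamPath {V : Type*} [Fintype V] (G : SimpleGraph V) : Prop :=
  ∃ v : Fin (Fintype.card V) → V, Function.Bijective v ∧
    ∀ i j : Fin (Fintype.card V), (j : ℕ) = (i : ℕ) + 1 → G.Adj (v i) (v j)

/-- `y` is `r`-reachable from `x` w.r.t. the vertex ordering given by the
injection `f : V → ℕ`. -/
def RReach {V : Type*} (G : SimpleGraph V) (f : V → ℕ) (r : ℕ) (x y : V) : Prop :=
  f y < f x ∧ ∃ w : G.Walk x y, w.IsPath ∧ w.length ≤ r ∧
    ∀ z ∈ w.support, z ≠ x → z ≠ y → f x < f z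

/-- `col_r(G) ≤ k`: some linear order on the vertices witnesses that at most `k`
vertices are `r`-reachable from every vertex. -/
def ColAtMost {V : Type*} (G : SimpleGraph V) (r k : ℕ) : Prop :=
  ∃ f : V → ℕ, Function.Injective f ∧ ∀ x : V, {y | RReach G f r x y}.ncard ≤ k

end PaperDefs
namespace PaperDefs

/-- The function `h` with `h 1 = 3` and `h (ℓ+1) = 2 + 2 * h ℓ`
(equivalently `h ℓ = 5·2^(ℓ-1) - 2` for `ℓ ≥ 1`). -/
def h : ℕ → ℕ
  | 0 => 0
  | 1 => 3
  | n + 2 => 2 + 2 * h (n + 1)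

/-- Shift a set of pairs of integers by `i`. -/
def shift (X : Set (ℕ × ℕ)) (i : ℕ) : Set (ℕ × ℕ) := (fun q => (q.1 + i, q.2 + i)) '' X

/-- The nested interval system `N_ℓ`. -/
def Nset : ℕ → Set (ℕ × ℕ)
  | 0 => ∅
  | 1 => {(1, 3)}
  | ℓ + 2 => {(1, h (ℓ + 2))} ∪ shift (Nset (ℓ + 1)) 1 ∪ shift (Nset (ℓ + 1)) (h (ℓ + 1) + 1)

/-- Nodes of the complete binary tree of depth `p`, heap-indexed by
`1, …, 2^p - 1` (node `i` has children `2i` and `2i+1`). -/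
def isNode (p i : ℕ) : Prop := 1 ≤ i ∧ i < 2 ^ p

/-- Adjacency in the complete binary tree of depth `p` (heap indexing). -/
def treeAdj (p s t : ℕ) : Prop := isNode p s ∧ isNode p t ∧ (s = t / 2 ∨ t = s / 2)

/-- The depth of node `i` (the root `1` has depth `1`). -/
def nodeDepth (i : ℕ) : ℕ := Nat.log 2 i + 1

/-- `s ⪯ t` : `s` is an ancestor of `t` (heap indexing). -/
def anc (s t : ℕ) : Prop := ∃ k, t / 2 ^ k = s

/-- `s ≺ t` : `s` is a strict ancestor of `t` (heap indexing). -/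
def strictAnc (s t : ℕ) : Prop := ∃ k, 1 ≤ k ∧ t / 2 ^ k = s

/-- The nodes of the complete binary tree of depth `p`. -/
abbrev TNode (p : ℕ) := {i : Fin (2 ^ p) // 1 ≤ (i : ℕ)}

/-- The non-root nodes of the complete binary tree of depth `p`. -/
abbrev NRNode (p : ℕ) := {i : Fin (2 ^ p) // 2 ≤ (i : ℕ)}

/-- Vertices of a blow-up of the complete binary tree of depth `p`:
for every node `s` a clique `K^s` on 3 vertices (`Sum.inl (s, i)`),
and for every non-root node `t` the four subdivision vertices
`pred t = {x₁, y₁, x₂, y₂}` (`Sum.inr (t, j)` with `j = 0, 1, 2, 3`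
standing for `x₁, y₁, x₂, y₂`; so `tpred t = {0, 2}` and `bpred t = {1, 3}`). -/
abbrev BV (p : ℕ) := (TNode p × Fin 3) ⊕ (NRNode p × Fin 4)

/-- The projection `π` mapping a vertex of the blow-up to (the heap index of)
the node of the tree it originates from. -/
def πn {p : ℕ} : BV p → ℕ
  | Sum.inl (s, _) => (s.1 : ℕ)
  | Sum.inr (t, _) => (t.1 : ℕ)

/-- The depth of a vertex of the blow-up. -/
def vDepth {p : ℕ} (u : BV p) : ℕ := nodeDepth (πn u)

/-- Edges of the triangle `K^s` (on vertex set `Fin 3`) are identified with the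
vertex they miss; `other k b` enumerates (as `b` ranges over `Bool`) the two
endpoints of the edge `k`. -/
def other (k : Fin 3) (b : Bool) : Fin 3 := k + (if b then 1 else 2)

/-- The arbitrary choices made when constructing a blow-up of the complete binary
tree of depth `p`: the injections `μ_s` from the neighbors of `s` to the edges of
`K^s` (an edge of `K^s` being encoded by the vertex of `Fin 3` it misses), the
choices `ε` of labelings of the endpoints of the edges `μ_s t`, and the top (root)
edge of the root clique, which must be outside the image of `μ` at the root. -/
structure BUChoices (p : ℕ) where
  μ : ℕ → ℕ → Fin 3
  ε : ℕ → ℕ → Bool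
  rootTop : Fin 3
  μ_inj : ∀ s t t', treeAdj p s t → treeAdj p s t' → μ s t = μ s t' → t = t'
  rootTop_spec : ∀ t, treeAdj p 1 t → μ 1 t ≠ rootTop

/-- The (encoding of the) top edge of the clique `K^s`. -/
def topIdx {p : ℕ} (C : BUChoices p) (s : ℕ) : Fin 3 :=
  if s = 1 then C.rootTop else C.μ s (s / 2)

/-- The base relation of the blow-up: clique edges inside each `K^s`, and for every
non-root node `t` with parent `s` the two paths
`L(s,t) = u₁ x₁ y₁ v₁` and `R(s,t) = u₂ x₂ y₂ v₂`, where `u₁, u₂` are the endpoints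
of `μ_s t` and `v₁, v₂` those of `μ_t s` (as labeled by `ε`). -/
def buRel {p : ℕ} (C : BUChoices p) : BV p → BV p → Prop
  | Sum.inl (s, i), Sum.inl (s', j) => s = s' ∧ i ≠ j
  | Sum.inl (s, i), Sum.inr (t, j) =>
      ((s.1 : ℕ) = (t.1 : ℕ) / 2 ∧
        ((j = 0 ∧ i = other (C.μ (s.1 : ℕ) (t.1 : ℕ)) (C.ε (s.1 : ℕ) (t.1 : ℕ))) ∨
         (j = 2 ∧ i = other (C.μ (s.1 : ℕ) (t.1 : ℕ)) (! C.ε (s.1 : ℕ) (t.1 : ℕ))))) ∨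
      ((s.1 : ℕ) = (t.1 : ℕ) ∧
        ((j = 1 ∧ i = other (C.μ (t.1 : ℕ) ((t.1 : ℕ) / 2)) (C.ε (t.1 : ℕ) ((t.1 : ℕ) / 2))) ∨
         (j = 3 ∧ i = other (C.μ (t.1 : ℕ) ((t.1 : ℕ) / 2)) (! C.ε (t.1 : ℕ) ((t.1 : ℕ) / 2)))))
  | Sum.inr (t, j), Sum.inr (t', j') => t = t' ∧ ((j = 0 ∧ j' = 1) ∨ (j = 2 ∧ j' = 3))
  | Sum.inr _, Sum.inl _ => False

/-- The blow-up of the complete binary tree of depth `p`, for the choices `C`. -/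
def blowup {p : ℕ} (C : BUChoices p) : SimpleGraph (BV p) := SimpleGraph.fromRel (buRel C)

/-- A vertex incident with the root edge of the blow-up. -/
def isRootEnd {p : ℕ} (C : BUChoices p) (u : BV p) : Prop :=
  ∃ s x, u = Sum.inl (s, x) ∧ (s.1 : ℕ) = 1 ∧ x ≠ C.rootTop

/-- The arbitrary choices made when constructing `G_ℓ`: those of the underlying
blow-up of `B_ℓ` (the complete binary tree of depth `h ℓ`) together with, for every
pair `s ≺ t`, the labeling `ρ` of the endpoints `u₁, u₂` of the top edge of `K^s`
used for the ribs towards `pred t`. -/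
structure GChoices (ℓ : ℕ) extends BUChoices (h ℓ) where
  ρ : ℕ → ℕ → Bool

/-- The rib edges: for `s ≺ t` with `(depth s, depth t) ∈ N_ℓ`, the edges
`u₁x₁, u₁x₂, u₂y₁, u₂y₂` where `u₁u₂` is the top edge of `K^s`. -/
def ribRel {ℓ : ℕ} (C : GChoices ℓ) : BV (h ℓ) → BV (h ℓ) → Prop
  | Sum.inl (s, i), Sum.inr (t, j) =>
      strictAnc (s.1 : ℕ) (t.1 : ℕ) ∧ (nodeDepth (s.1 : ℕ), nodeDepth (t.1 : ℕ)) ∈ Nset ℓ ∧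
      (((j = 0 ∨ j = 2) ∧ i = other (topIdx C.toBUChoices (s.1 : ℕ)) (C.ρ (s.1 : ℕ) (t.1 : ℕ))) ∨
       ((j = 1 ∨ j = 3) ∧ i = other (topIdx C.toBUChoices (s.1 : ℕ)) (! C.ρ (s.1 : ℕ) (t.1 : ℕ))))
  | _, _ => False

/-- The graph `G_ℓ`: the blow-up `H_ℓ` of `B_ℓ` together with the ribs. -/
def Gl {ℓ : ℕ} (C : GChoices ℓ) : SimpleGraph (BV (h ℓ)) :=
  SimpleGraph.fromRel (fun u v => buRel C.toBUChoices u v ∨ ribRel C u v)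

/-- `s` is a source of `B_ℓ` of rank `a`. -/
def IsSourceOfRank (ℓ s a : ℕ) : Prop :=
  isNode (h ℓ) s ∧ 1 ≤ a ∧ a ≤ ℓ ∧ (nodeDepth s, nodeDepth s + h a - 1) ∈ Nset ℓ

/-- `s` is a source of `B_ℓ`. -/
def IsSource (ℓ s : ℕ) : Prop := isNode (h ℓ) s ∧ ∃ j, (nodeDepth s, j) ∈ Nset ℓ

/-- `t` is an internal node of `B_ℓ(s)`, for `s` a source of rank `a`. -/
def InternalNode (ℓ s a t : ℕ) : Prop :=
  strictAnc s t ∧ nodeDepth t < nodeDepth s + h a - 1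

/-- `t` is a node of the subtree `B_ℓ(s)`, for `s` a source of rank `a`. -/
def SubtreeNode (ℓ s a t : ℕ) : Prop :=
  anc s t ∧ nodeDepth t ≤ nodeDepth s + h a - 1

/-- The set of ranks of sources `s` such that `t` is an internal node of `B_ℓ(s)`. -/
def tauSet (ℓ t : ℕ) : Set ℕ := {a | ∃ s, IsSourceOfRank ℓ s a ∧ InternalNode ℓ s a t}

/-- `τ(u)`: the minimum rank of a source `s` such that `π(u)` is an internal node of
`B_ℓ(s)`, and `ℓ + 1` if there is no such source. -/
noncomputable def tau (ℓ : ℕ) (u : BV (h ℓ)) : ℕ := by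
  classical
  exact if (tauSet ℓ (πn u)).Nonempty then sInf (tauSet ℓ (πn u)) else ℓ + 1

/-- `u` is a vertex incident with the top edge of the clique `K^s`. -/
def TopEdgeVert {ℓ : ℕ} (C : GChoices ℓ) (s : ℕ) (u : BV (h ℓ)) : Prop :=
  ∃ sn x, u = Sum.inl (sn, x) ∧ (sn.1 : ℕ) = s ∧ x ≠ topIdx C.toBUChoices s

/-- `u ∈ pred s`. -/
def InPred {p : ℕ} (s : ℕ) (u : BV p) : Prop := ∃ t j, u = Sum.inr (t, j) ∧ (t.1 : ℕ) = s

/-- `u` and `w` lie in a common clique `K^s`. -/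
def CliquePair {p : ℕ} (u w : BV p) : Prop :=
  ∃ s i j, u = Sum.inl (s, i) ∧ w = Sum.inl (s, j)

/-- `uw` is a tree edge of `G_ℓ`: an edge of the blow-up `H_ℓ` that is not a
clique edge. -/
def IsTreeEdge {ℓ : ℕ} (C : GChoices ℓ) (u w : BV (h ℓ)) : Prop :=
  (blowup C.toBUChoices).Adj u w ∧ ¬ CliquePair u w

/-- The source `s` is `Q`-special for the induced path `Q = v`. -/
def QSpecial {ℓ q : ℕ} (C : GChoices ℓ) (v : Fin q → BV (h ℓ)) (s : ℕ) : Prop :=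
  ∃ a, IsSourceOfRank ℓ s a ∧ (∃ i, TopEdgeVert C s (v i)) ∧
    ∃ j, InternalNode ℓ s a (πn (v j))

end PaperDefs
namespace PaperDefs


/-! ### Auxiliary lemmas -/

lemma h_zero : h 0 = 0 := rfl
lemma h_one : h 1 = 3 := rfl
lemma h_succ_succ (n : ℕ) : h (n+2) = 2 + 2 * h (n+1) := rfl

lemma h_succ {a : ℕ} (ha : 1 ≤ a) : h (a+1) = 2 + 2 * h a := by
  rcases a with _ | n
  · omega
  · rfl

lemma h_three : ∀ a : ℕ, 1 ≤ a → 3 ≤ h a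
  | 1, _ => le_refl 3
  | (n+2), _ => by have := h_three (n+1) (by omega); rw [h_succ_succ]; omega

lemma h_lt {a b : ℕ} (ha : 1 ≤ a) (hab : a < b) : h a < h b := by
  induction b with
  | zero => omega
  | succ n ih =>
    have h3 : 3 ≤ h a := h_three a ha
    rcases Nat.lt_succ_iff_lt_or_eq.mp hab with h1 | h1
    · have := ih h1
      have hn1 : 1 ≤ n := by omega
      rw [h_succ hn1]; omega
    · subst h1; rw [h_succ ha]; omega

lemma h_eq {a b : ℕ} (ha : 1 ≤ a) (hb : 1 ≤ b) (he : h a = h b) : a = b := by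
  rcases Nat.lt_trichotomy a b with hlt | heq | hlt
  · have := h_lt ha hlt; omega
  · exact heq
  · have := h_lt hb hlt; omega

/-- The set of possible `τ`-values at depth `d`, described purely in terms of
depths. -/
def Dset (ℓ d : ℕ) : Set ℕ :=
  {a | ∃ x, (x, x + h a - 1) ∈ Nset ℓ ∧ x < d ∧ d < x + h a - 1}

/-- `τ` as a function of the depth. -/
noncomputable def taud (ℓ d : ℕ) : ℕ := by
  classical
  exact if (Dset ℓ d).Nonempty then sInf (Dset ℓ d) else ℓ + 1

lemma shift_mem {X : Set (ℕ × ℕ)} {i x y : ℕ} :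
    (x, y) ∈ shift X i ↔ ∃ a b, (a, b) ∈ X ∧ x = a + i ∧ y = b + i := by
  constructor
  · rintro ⟨⟨a, b⟩, hab, heq⟩
    exact ⟨a, b, hab, by simpa using (congrArg Prod.fst heq).symm,
      by simpa using (congrArg Prod.snd heq).symm⟩
  · rintro ⟨a, b, hab, rfl, rfl⟩
    exact ⟨(a, b), hab, rfl⟩

lemma nset_succ_iff {ℓ x y : ℕ} (hℓ : 1 ≤ ℓ) :
    (x, y) ∈ Nset (ℓ+1) ↔ (x = 1 ∧ y = h (ℓ+1)) ∨
      (∃ a b, (a, b) ∈ Nset ℓ ∧ x = a + 1 ∧ y = b + 1) ∨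
      (∃ a b, (a, b) ∈ Nset ℓ ∧ x = a + (h ℓ + 1) ∧ y = b + (h ℓ + 1)) := by
  rcases ℓ with _ | m
  · omega
  · show (x, y) ∈ ({((1:ℕ), h (m+2))} ∪ shift (Nset (m+1)) 1 ∪
      shift (Nset (m+1)) (h (m+1) + 1)) ↔ _
    constructor
    · intro hm
      rcases hm with (hm | hm) | hm
      · rw [Set.mem_singleton_iff] at hm
        simp only [Prod.mk.injEq] at hm
        exact Or.inl hm
      · rcases shift_mem.mp hm with ⟨a, b, hab, rfl, rfl⟩
        exact Or.inr (Or.inl ⟨a, b, hab, rfl, rfl⟩)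
      · rcases shift_mem.mp hm with ⟨a, b, hab, rfl, rfl⟩
        exact Or.inr (Or.inr ⟨a, b, hab, rfl, rfl⟩)
    · intro hm
      rcases hm with ⟨rfl, rfl⟩ | ⟨a, b, hab, rfl, rfl⟩ | ⟨a, b, hab, rfl, rfl⟩
      · exact Or.inl (Or.inl rfl)
      · exact Or.inl (Or.inr (shift_mem.mpr ⟨a, b, hab, rfl, rfl⟩))
      · exact Or.inr (shift_mem.mpr ⟨a, b, hab, rfl, rfl⟩)

lemma nset_one_mem : ((1:ℕ), (3:ℕ)) ∈ Nset 1 := rfl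

lemma nset_rank : ∀ ℓ x y : ℕ, (x, y) ∈ Nset ℓ →
    1 ≤ x ∧ y ≤ h ℓ ∧ ∃ a, 1 ≤ a ∧ a ≤ ℓ ∧ y = x + h a - 1 := by
  intro ℓ
  induction ℓ with
  | zero => intro x y hm; exact hm.elim
  | succ n ih =>
    intro x y hm
    rcases Nat.eq_zero_or_pos n with rfl | hn
    · have hm' : (x, y) = ((1:ℕ), (3:ℕ)) := hm
      simp only [Prod.mk.injEq] at hm'
      obtain ⟨rfl, rfl⟩ := hm'
      exact ⟨le_refl 1, by rw [h_one], 1, le_refl 1, le_refl 1, by rw [h_one]⟩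
    · have h3 := h_three n hn
      have hs := h_succ hn
      rw [nset_succ_iff hn] at hm
      rcases hm with ⟨rfl, rfl⟩ | ⟨a, b, hab, rfl, rfl⟩ | ⟨a, b, hab, rfl, rfl⟩
      · refine ⟨le_refl 1, le_refl _, n+1, by omega, le_refl _, ?_⟩
        have := h_three (n+1) (by omega); omega
      · obtain ⟨ha1, hb, c, hc1, hcn, rfl⟩ := ih a _ hab
        have h3c := h_three c hc1
        exact ⟨by omega, by omega, c, hc1, by omega, by omega⟩
      · obtain ⟨ha1, hb, c, hc1, hcn, rfl⟩ := ih a _ hab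
        have h3c := h_three c hc1
        exact ⟨by omega, by omega, c, hc1, by omega, by omega⟩

lemma dset_bounds {ℓ d a : ℕ} (hm : a ∈ Dset ℓ d) :
    1 ≤ a ∧ a ≤ ℓ ∧ 2 ≤ d ∧ d + 1 ≤ h ℓ := by
  obtain ⟨x, hx, h1, h2⟩ := hm
  obtain ⟨hx1, hy, c, hc1, hcl, hyc⟩ := nset_rank ℓ _ _ hx
  have h3c := h_three c hc1
  have hca : h a = h c := by omega
  have ha1 : 1 ≤ a := by
    rcases Nat.eq_zero_or_pos a with rfl | ha
    · rw [h_zero] at hca; omega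
    · exact ha
  have := h_eq ha1 hc1 hca
  omega

lemma taud_empty {ℓ d : ℕ} (hne : ¬ (Dset ℓ d).Nonempty) : taud ℓ d = ℓ + 1 := by
  unfold taud; rw [if_neg hne]

lemma taud_mem {ℓ d : ℕ} (hne : (Dset ℓ d).Nonempty) : taud ℓ d ∈ Dset ℓ d := by
  unfold taud; rw [if_pos hne]; exact Nat.sInf_mem hne

lemma taud_le_of_mem {ℓ d a : ℕ} (ha : a ∈ Dset ℓ d) : taud ℓ d ≤ a := by
  unfold taud; rw [if_pos (Set.nonempty_of_mem ha)]; exact Nat.sInf_le ha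

lemma taud_out {ℓ d : ℕ} (hd : d ≤ 1 ∨ h ℓ ≤ d) : taud ℓ d = ℓ + 1 := by
  apply taud_empty
  rintro ⟨a, ha⟩
  have := dset_bounds ha
  omega

lemma taud_le (ℓ d : ℕ) : taud ℓ d ≤ ℓ + 1 := by
  by_cases hne : (Dset ℓ d).Nonempty
  · have := dset_bounds (taud_mem hne); omega
  · rw [taud_empty hne]

lemma taud_pos (ℓ d : ℕ) : 1 ≤ taud ℓ d := by
  by_cases hne : (Dset ℓ d).Nonempty
  · have := dset_bounds (taud_mem hne); omega
  · rw [taud_empty hne]; omega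

lemma dset_mem_one {a d : ℕ} : a ∈ Dset 1 d ↔ a = 1 ∧ d = 2 := by
  constructor
  · rintro ⟨x, hx, h1, h2⟩
    have hx' : (x, x + h a - 1) = ((1:ℕ), (3:ℕ)) := hx
    simp only [Prod.mk.injEq] at hx'
    obtain ⟨rfl, hy⟩ := hx'
    have ha3 : h a = 3 := by omega
    have ha1 : 1 ≤ a := by
      rcases Nat.eq_zero_or_pos a with rfl | ha
      · rw [h_zero] at ha3; omega
      · exact ha
    have := h_eq ha1 (le_refl 1) (by rw [ha3, h_one])
    constructor
    · exact this
    · omega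
  · rintro ⟨rfl, rfl⟩
    refine ⟨1, ?_, by have := h_one; omega, by have := h_one; omega⟩
    have : (1 + h 1 - 1 : ℕ) = 3 := by rw [h_one]
    rw [this]
    exact nset_one_mem

lemma taud_one (d : ℕ) : taud 1 d = if d = 2 then 1 else 2 := by
  split
  · next hd =>
    subst hd
    have h1 : (1:ℕ) ∈ Dset 1 2 := dset_mem_one.mpr ⟨rfl, rfl⟩
    have h2 := taud_le_of_mem h1
    have h3 := taud_pos 1 2
    omega
  · next hd =>
    apply taud_empty
    rintro ⟨a, ha⟩
    exact hd (dset_mem_one.mp ha).2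

lemma dset_succ_iff {ℓ d a : ℕ} (hℓ : 1 ≤ ℓ) :
    a ∈ Dset (ℓ+1) d ↔ (a = ℓ + 1 ∧ 2 ≤ d ∧ d + 1 ≤ h (ℓ+1)) ∨
      a ∈ Dset ℓ (d - 1) ∨ a ∈ Dset ℓ (d - (h ℓ + 1)) := by
  have h3ℓ := h_three ℓ hℓ
  have h3s := h_three (ℓ+1) (by omega)
  constructor
  · rintro ⟨x, hx, h1, h2⟩
    rw [nset_succ_iff hℓ] at hx
    rcases hx with ⟨rfl, hy⟩ | ⟨b, c, hbc, rfl, hy⟩ | ⟨b, c, hbc, rfl, hy⟩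
    · -- head
      have hhA : h a = h (ℓ+1) := by omega
      have ha1 : 1 ≤ a := by
        rcases Nat.eq_zero_or_pos a with rfl | ha
        · rw [h_zero] at hhA; omega
        · exact ha
      have := h_eq ha1 (by omega : 1 ≤ ℓ+1) hhA
      exact Or.inl ⟨this, by omega, by omega⟩
    · obtain ⟨hb1, hc, e, he1, heℓ, rfl⟩ := nset_rank ℓ _ _ hbc
      have h3e := h_three e he1
      have hhA : h a = h e := by omega
      right; left
      refine ⟨b, ?_, by omega, by omega⟩
      have heq : b + h a - 1 = b + h e - 1 := by omega
      rw [heq]; exact hbc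
    · obtain ⟨hb1, hc, e, he1, heℓ, rfl⟩ := nset_rank ℓ _ _ hbc
      have h3e := h_three e he1
      have hhA : h a = h e := by omega
      right; right
      refine ⟨b, ?_, by omega, by omega⟩
      have heq : b + h a - 1 = b + h e - 1 := by omega
      rw [heq]; exact hbc
  · rintro (⟨rfl, hd1, hd2⟩ | hm | hm)
    · refine ⟨1, ?_, by omega, by omega⟩
      rw [nset_succ_iff hℓ]
      exact Or.inl ⟨rfl, by omega⟩
    · obtain ⟨x, hx, h1, h2⟩ := hm
      have hb := dset_bounds (⟨x, hx, h1, h2⟩ : a ∈ Dset ℓ (d-1))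
      obtain ⟨hx1, hy, c, hc1, hcl, hyc⟩ := nset_rank ℓ _ _ hx
      have h3c := h_three c hc1
      have hha : h a = h c := by omega
      refine ⟨x + 1, ?_, by omega, by omega⟩
      rw [nset_succ_iff hℓ]
      refine Or.inr (Or.inl ⟨x, x + h a - 1, hx, rfl, by omega⟩)
    · obtain ⟨x, hx, h1, h2⟩ := hm
      have hb := dset_bounds (⟨x, hx, h1, h2⟩ : a ∈ Dset ℓ (d - (h ℓ + 1)))
      obtain ⟨hx1, hy, c, hc1, hcl, hyc⟩ := nset_rank ℓ _ _ hx
      have h3c := h_three c hc1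
      have hha : h a = h c := by omega
      refine ⟨x + (h ℓ + 1), ?_, by omega, by omega⟩
      rw [nset_succ_iff hℓ]
      refine Or.inr (Or.inr ⟨x, x + h a - 1, hx, rfl, by omega⟩)

lemma taud_master {ℓ d : ℕ} (hℓ : 1 ≤ ℓ) (h2 : 2 ≤ d) (hle : d + 1 ≤ h (ℓ+1)) :
    taud (ℓ+1) d = min (ℓ+1) (min (taud ℓ (d-1)) (taud ℓ (d - (h ℓ + 1)))) := by
  have hmem : (ℓ+1) ∈ Dset (ℓ+1) d := (dset_succ_iff hℓ).mpr (Or.inl ⟨rfl, h2, hle⟩)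
  apply le_antisymm
  · apply le_min (taud_le_of_mem hmem)
    apply le_min
    · by_cases hne : (Dset ℓ (d-1)).Nonempty
      · exact taud_le_of_mem ((dset_succ_iff hℓ).mpr (Or.inr (Or.inl (taud_mem hne))))
      · rw [taud_empty hne]
        have := taud_le_of_mem hmem; omega
    · by_cases hne : (Dset ℓ (d - (h ℓ + 1))).Nonempty
      · exact taud_le_of_mem ((dset_succ_iff hℓ).mpr (Or.inr (Or.inr (taud_mem hne))))
      · rw [taud_empty hne]
        have := taud_le_of_mem hmem; omega
  · have hne : (Dset (ℓ+1) d).Nonempty := ⟨_, hmem⟩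
    have hM := taud_mem hne
    rcases (dset_succ_iff hℓ).mp hM with ⟨he, _⟩ | hm | hm
    · rw [he]; exact min_le_left _ _
    · have := taud_le_of_mem hm
      calc min (ℓ+1) (min (taud ℓ (d-1)) (taud ℓ (d - (h ℓ + 1))))
          ≤ taud ℓ (d-1) := le_trans (min_le_right _ _) (min_le_left _ _)
        _ ≤ taud (ℓ+1) d := this
    · have := taud_le_of_mem hm
      calc min (ℓ+1) (min (taud ℓ (d-1)) (taud ℓ (d - (h ℓ + 1))))
          ≤ taud ℓ (d - (h ℓ + 1)) := le_trans (min_le_right _ _) (min_le_right _ _)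
        _ ≤ taud (ℓ+1) d := this

lemma taud_lip (ℓ : ℕ) (hℓ : 1 ≤ ℓ) (d : ℕ) :
    taud ℓ (d+1) ≤ taud ℓ d + 1 ∧ taud ℓ d ≤ taud ℓ (d+1) + 1 := by
  induction ℓ generalizing d with
  | zero => omega
  | succ n ih =>
    rcases Nat.eq_zero_or_pos n with rfl | hn
    · rw [show (0:ℕ)+1 = 1 from rfl, taud_one, taud_one]
      split_ifs <;> omega
    · have h3 := h_three n hn
      have hs := h_succ hn
      rcases Nat.lt_or_ge d 2 with hd2 | hd2
      · rcases Nat.lt_or_ge d 1 with hd0 | hd1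
        · have e1 := taud_out (ℓ := n+1) (d := d) (by omega)
          have e2 := taud_out (ℓ := n+1) (d := d+1) (by omega)
          omega
        · have hd : d = 1 := by omega
          subst hd
          rw [show (1:ℕ)+1 = 2 from rfl]
          have e1 := taud_out (ℓ := n+1) (d := 1) (by omega)
          have e2 : taud (n+1) 2 = n+1 := by
            rw [taud_master hn (by omega) (by omega)]
            rw [taud_out (ℓ := n) (d := 2 - 1) (by omega),
              taud_out (ℓ := n) (d := 2 - (h n + 1)) (by omega)]
            omega
          omega
      · rcases Nat.lt_or_ge (d+1) (h (n+1)) with hrg | hrg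
        · have m1 := taud_master (ℓ := n) (d := d) hn hd2 (by omega)
          have m2 := taud_master (ℓ := n) (d := d+1) hn (by omega) (by omega)
          have e1 : d + 1 - 1 = d := by omega
          rw [e1] at m2
          have p1 := ih hn (d-1)
          have e2 : d - 1 + 1 = d := by omega
          rw [e2] at p1
          rcases Nat.lt_or_ge d (h n + 1) with hsm | hsm
          · have z1 : d - (h n + 1) = 0 := by omega
            have z2 : d + 1 - (h n + 1) = d - h n := by omega
            have z3 : d - h n = 0 := by omega
            rw [z1] at m1
            rw [z2, z3] at m2
            have t0 := taud_out (ℓ := n) (d := 0) (by omega)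
            omega
          · have z2 : d + 1 - (h n + 1) = (d - (h n + 1)) + 1 := by omega
            rw [z2] at m2
            have p2 := ih hn (d - (h n + 1))
            omega
        · rcases Nat.lt_or_ge d (h (n+1)) with hb | hb
          · have e2 := taud_out (ℓ := n+1) (d := d+1) (by omega)
            have m1 := taud_master (ℓ := n) (d := d) hn hd2 (by omega)
            have o1 := taud_out (ℓ := n) (d := d - 1) (by omega)
            have o2 := taud_out (ℓ := n) (d := d - (h n + 1)) (by omega)
            omega
          · have e1 := taud_out (ℓ := n+1) (d := d) (by omega)
            have e2 := taud_out (ℓ := n+1) (d := d+1) (by omega)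
            omega

lemma taud_nset (ℓ : ℕ) (hℓ : 1 ≤ ℓ) : ∀ x y : ℕ, (x, y) ∈ Nset ℓ →
    taud ℓ x = taud ℓ y := by
  induction ℓ with
  | zero => omega
  | succ n ih =>
    intro x y hm
    rcases Nat.eq_zero_or_pos n with rfl | hn
    · have hm' : (x, y) = ((1:ℕ), (3:ℕ)) := hm
      simp only [Prod.mk.injEq] at hm'
      obtain ⟨rfl, rfl⟩ := hm'
      rw [show (0:ℕ)+1 = 1 from rfl, taud_one, taud_one]
      norm_num
    · have h3 := h_three n hn
      have hs := h_succ hn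
      rw [nset_succ_iff hn] at hm
      rcases hm with ⟨rfl, rfl⟩ | ⟨a, b, hab, rfl, rfl⟩ | ⟨a, b, hab, rfl, rfl⟩
      · rw [taud_out (Or.inl (le_refl 1)), taud_out (Or.inr (le_refl _))]
      · obtain ⟨ha1, hb, c, hc1, hcn, rfl⟩ := nset_rank n _ _ hab
        have h3c := h_three c hc1
        have hM1 := taud_master (ℓ := n) (d := a+1) hn (by omega) (by omega)
        have hM2 := taud_master (ℓ := n) (d := (a + h c - 1)+1) hn (by omega) (by omega)
        have e1 : a + 1 - 1 = a := by omega
        have e2 : a + 1 - (h n + 1) = 0 := by omega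
        have e3 : a + h c - 1 + 1 - 1 = a + h c - 1 := by omega
        have e4 : a + h c - 1 + 1 - (h n + 1) = 0 := by omega
        rw [e1, e2] at hM1
        rw [e3, e4] at hM2
        have hEq := ih hn a _ hab
        have t0 := taud_out (ℓ := n) (d := 0) (by omega)
        omega
      · obtain ⟨ha1, hb, c, hc1, hcn, rfl⟩ := nset_rank n _ _ hab
        have h3c := h_three c hc1
        have hM1 := taud_master (ℓ := n) (d := a + (h n + 1)) hn (by omega) (by omega)
        have hM2 := taud_master (ℓ := n) (d := (a + h c - 1) + (h n + 1)) hn (by omega) (by omega)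
        have e1 : a + (h n + 1) - 1 = a + h n := by omega
        have e2 : a + (h n + 1) - (h n + 1) = a := by omega
        have e3 : a + h c - 1 + (h n + 1) - 1 = a + h c - 1 + h n := by omega
        have e4 : a + h c - 1 + (h n + 1) - (h n + 1) = a + h c - 1 := by omega
        rw [e1, e2] at hM1
        rw [e3, e4] at hM2
        have hEq := ih hn a _ hab
        have o1 := taud_out (ℓ := n) (d := a + h n) (by omega)
        have o2 := taud_out (ℓ := n) (d := a + h c - 1 + h n) (by omega)
        omega

lemma taud_drop (ℓ : ℕ) (hℓ : 1 ≤ ℓ) (d : ℕ) (hdrop : taud ℓ (d+1) < taud ℓ d) :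
    ∃ y, (d, y) ∈ Nset ℓ := by
  induction ℓ generalizing d with
  | zero => omega
  | succ n ih =>
    rcases Nat.eq_zero_or_pos n with rfl | hn
    · rw [show (0:ℕ)+1 = 1 from rfl, taud_one, taud_one] at hdrop
      have hd : d = 1 := by split_ifs at hdrop <;> omega
      subst hd
      exact ⟨3, nset_one_mem⟩
    · have h3 := h_three n hn
      have hs := h_succ hn
      rcases Nat.lt_or_ge d 2 with hd2 | hd2
      · rcases Nat.lt_or_ge d 1 with hd0 | hd1
        · exfalso
          have e1 := taud_out (ℓ := n+1) (d := d) (by omega)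
          have e2 := taud_out (ℓ := n+1) (d := d+1) (by omega)
          omega
        · have hd : d = 1 := by omega
          subst hd
          refine ⟨h (n+1), ?_⟩
          rw [nset_succ_iff hn]
          exact Or.inl ⟨rfl, rfl⟩
      · rcases Nat.lt_or_ge (d+1) (h (n+1)) with hrg | hrg
        · have m1 := taud_master (ℓ := n) (d := d) hn hd2 (by omega)
          have m2 := taud_master (ℓ := n) (d := d+1) hn (by omega) (by omega)
          have e1 : d + 1 - 1 = d := by omega
          rw [e1] at m2
          have tle1 := taud_le n (d-1)
          have tle2 := taud_le n d
          rcases Nat.lt_or_ge d (h n + 1) with hsm | hsm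
          · rcases Nat.lt_or_ge d (h n) with hsm' | hsm'
            · have z1 : d - (h n + 1) = 0 := by omega
              have z2 : d + 1 - (h n + 1) = 0 := by omega
              rw [z1] at m1
              rw [z2] at m2
              have t0 := taud_out (ℓ := n) (d := 0) (by omega)
              have key : taud n d < taud n (d - 1) := by omega
              have e2 : d - 1 + 1 = d := by omega
              obtain ⟨y, hy⟩ := ih hn (d-1) (by rw [e2]; exact key)
              refine ⟨y + 1, ?_⟩
              rw [nset_succ_iff hn]
              exact Or.inr (Or.inl ⟨d - 1, y, hy, by omega, rfl⟩)
            · -- d = h n  or h n < d ≤ h n : d = h n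
              exfalso
              have z1 : d - (h n + 1) = 0 := by omega
              have z2 : d + 1 - (h n + 1) = d - h n := by omega
              have z3 : d - h n = 0 := by omega
              rw [z1] at m1
              rw [z2, z3] at m2
              have t0 := taud_out (ℓ := n) (d := 0) (by omega)
              have o1 := taud_out (ℓ := n) (d := d) (by omega)
              -- hdrop : min (n+1) (min (taud n d) (n+1)) < min (n+1) (min (taud n (d-1)) (n+1))
              -- taud n d = n+1 so LHS = n+1 ≥ RHS : contradiction
              omega
          · rcases Nat.lt_or_ge d (h n + 2) with hsm' | hsm'
            · -- d = h n + 1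
              exfalso
              have z1 : d - (h n + 1) = 0 := by omega
              have z2 : d + 1 - (h n + 1) = 1 := by omega
              rw [z1] at m1
              rw [z2] at m2
              have t0 := taud_out (ℓ := n) (d := 0) (by omega)
              have t1 := taud_out (ℓ := n) (d := 1) (by omega)
              have o1 := taud_out (ℓ := n) (d := d) (by omega)
              have o2 := taud_out (ℓ := n) (d := d - 1) (by omega)
              omega
            · -- d ≥ h n + 2
              have z2 : d + 1 - (h n + 1) = (d - (h n + 1)) + 1 := by omega
              rw [z2] at m2
              have o1 := taud_out (ℓ := n) (d := d) (by omega)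
              have o2 := taud_out (ℓ := n) (d := d - 1) (by omega)
              have tle3 := taud_le n (d - (h n + 1))
              have tle4 := taud_le n (d - (h n + 1) + 1)
              have key : taud n (d - (h n + 1) + 1) < taud n (d - (h n + 1)) := by omega
              obtain ⟨y, hy⟩ := ih hn (d - (h n + 1)) key
              refine ⟨y + (h n + 1), ?_⟩
              rw [nset_succ_iff hn]
              exact Or.inr (Or.inr ⟨d - (h n + 1), y, hy, by omega, rfl⟩)
        · exfalso
          rcases Nat.lt_or_ge d (h (n+1)) with hb | hb
          · have e2 := taud_out (ℓ := n+1) (d := d+1) (by omega)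
            have tle := taud_le (n+1) d
            omega
          · have e1 := taud_out (ℓ := n+1) (d := d) (by omega)
            have e2 := taud_out (ℓ := n+1) (d := d+1) (by omega)
            omega

lemma log_div_pow (t k : ℕ) : Nat.log 2 (t / 2 ^ k) = Nat.log 2 t - k := by
  induction k with
  | zero => simp
  | succ n ih =>
    have e : t / 2 ^ (n+1) = t / 2 ^ n / 2 := by
      rw [Nat.div_div_eq_div_mul, pow_succ]
    rw [e, Nat.log_div_base, ih]
    omega

lemma strictAnc_depth {s t k : ℕ} (hs : 1 ≤ s) (ht : 1 ≤ t) (hk : 1 ≤ k)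
    (hdiv : t / 2 ^ k = s) : nodeDepth s + k = nodeDepth t := by
  have hle : 2 ^ k ≤ t := by
    by_contra hlt
    push_neg at hlt
    rw [Nat.div_eq_of_lt hlt] at hdiv
    omega
  have hklog : k ≤ Nat.log 2 t :=
    (Nat.le_log_iff_pow_le (by omega) (by omega)).mpr hle
  have hl := log_div_pow t k
  rw [hdiv] at hl
  unfold nodeDepth
  omega

lemma exists_ancestor {t x : ℕ} (ht : 1 ≤ t) (hx : 1 ≤ x) (hlt : x < nodeDepth t) :
    ∃ k, 1 ≤ k ∧ 1 ≤ t / 2 ^ k ∧ nodeDepth (t / 2 ^ k) = x := by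
  have hxlog : x - 1 ≤ Nat.log 2 t := by unfold nodeDepth at hlt; omega
  refine ⟨nodeDepth t - x, by unfold nodeDepth at hlt ⊢; omega, ?_, ?_⟩
  · have h1 : 2 ^ (nodeDepth t - x) ≤ 2 ^ Nat.log 2 t := by
      apply Nat.pow_le_pow_right (by omega)
      unfold nodeDepth
      omega
    have h2 : 2 ^ Nat.log 2 t ≤ t := Nat.pow_log_le_self 2 (by omega)
    exact (Nat.one_le_div_iff (by positivity)).mpr (le_trans h1 h2)
  · have hl := log_div_pow t (nodeDepth t - x)
    unfold nodeDepth at hl hlt ⊢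
    omega

lemma nodeDepth_parent {t : ℕ} (ht : 2 ≤ t) : nodeDepth (t / 2) + 1 = nodeDepth t := by
  have h1 : Nat.log 2 (t / 2 ^ 1) = Nat.log 2 t - 1 := log_div_pow t 1
  have h2 : 0 < Nat.log 2 t := Nat.log_pos (by omega) ht
  rw [pow_one] at h1
  unfold nodeDepth
  omega

lemma tauSet_eq {ℓ t : ℕ} (ht : isNode (h ℓ) t) : tauSet ℓ t = Dset ℓ (nodeDepth t) := by
  obtain ⟨ht1, ht2⟩ := ht
  ext a
  constructor
  · rintro ⟨s, ⟨⟨hs1, hs2⟩, ha1, haℓ, hmem⟩, ⟨⟨k, hk1, hdiv⟩, hintlt⟩⟩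
    have hd := strictAnc_depth hs1 ht1 hk1 hdiv
    exact ⟨nodeDepth s, hmem, by omega, hintlt⟩
  · rintro ⟨x, hmem, hx1, hx2⟩
    obtain ⟨hxx1, hy, c, hc1, hcℓ, hyc⟩ := nset_rank ℓ _ _ hmem
    have h3c := h_three c hc1
    have hac : h a = h c := by omega
    have ha0 : 1 ≤ a := by
      rcases Nat.eq_zero_or_pos a with rfl | ha
      · rw [h_zero] at hac; omega
      · exact ha
    have hacc : a = c := h_eq ha0 hc1 hac
    obtain ⟨k, hk1, hkpos, hkd⟩ := exists_ancestor ht1 hxx1 (by omega)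
    refine ⟨t / 2 ^ k,
      ⟨⟨hkpos, lt_of_le_of_lt (Nat.div_le_self t (2^k)) ht2⟩, ha0, by omega,
        by rw [hkd]; exact hmem⟩,
      ⟨⟨k, hk1, rfl⟩, by rw [hkd]; exact hx2⟩⟩

lemma tau_eq_taud {ℓ : ℕ} (u : BV (h ℓ)) : tau ℓ u = taud ℓ (vDepth u) := by
  have hnode : isNode (h ℓ) (πn u) := by
    rcases u with ⟨s, i⟩ | ⟨t, j⟩
    · exact ⟨s.2, s.1.2⟩
    · exact ⟨le_trans (by norm_num : (1:ℕ) ≤ 2) t.2, t.1.2⟩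
  unfold tau taud vDepth
  rw [tauSet_eq hnode]

lemma vDepth_inl {p : ℕ} (s : TNode p) (i : Fin 3) :
    vDepth (Sum.inl (s, i) : BV p) = nodeDepth (s.1 : ℕ) := rfl

lemma vDepth_inr {p : ℕ} (t : NRNode p) (j : Fin 4) :
    vDepth (Sum.inr (t, j) : BV p) = nodeDepth (t.1 : ℕ) := rfl

lemma buRel_inl_inl {p : ℕ} {C : BUChoices p} {s s' : TNode p} {i i' : Fin 3}
    (hb : buRel C (Sum.inl (s, i)) (Sum.inl (s', i'))) : s = s' := hb.1

lemma buRel_inr_inr {p : ℕ} {C : BUChoices p} {t t' : NRNode p} {j j' : Fin 4}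
    (hb : buRel C (Sum.inr (t, j)) (Sum.inr (t', j'))) : t = t' := hb.1

lemma buRel_false_inr_inl {p : ℕ} {C : BUChoices p} {t : NRNode p} {j : Fin 4}
    {s : TNode p} {i : Fin 3} (hb : buRel C (Sum.inr (t, j)) (Sum.inl (s, i))) : False := hb

lemma buRel_inl_inr {p : ℕ} {C : BUChoices p} {s : TNode p} {i : Fin 3}
    {t : NRNode p} {j : Fin 4} (hb : buRel C (Sum.inl (s, i)) (Sum.inr (t, j))) :
    (s.1 : ℕ) = (t.1 : ℕ) / 2 ∨ (s.1 : ℕ) = (t.1 : ℕ) :=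
  Or.imp And.left And.left hb

lemma ribRel_false_inl_inl {ℓ : ℕ} {C : GChoices ℓ} {s s' : TNode (h ℓ)} {i i' : Fin 3}
    (hr : ribRel C (Sum.inl (s, i)) (Sum.inl (s', i'))) : False := hr

lemma ribRel_false_inr_inl {ℓ : ℕ} {C : GChoices ℓ} {t : NRNode (h ℓ)} {j : Fin 4}
    {s : TNode (h ℓ)} {i : Fin 3} (hr : ribRel C (Sum.inr (t, j)) (Sum.inl (s, i))) :
    False := hr

lemma ribRel_false_inr_inr {ℓ : ℕ} {C : GChoices ℓ} {t t' : NRNode (h ℓ)} {j j' : Fin 4}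
    (hr : ribRel C (Sum.inr (t, j)) (Sum.inr (t', j'))) : False := hr

lemma ribRel_inl_inr_mem {ℓ : ℕ} {C : GChoices ℓ} {s : TNode (h ℓ)} {i : Fin 3}
    {t : NRNode (h ℓ)} {j : Fin 4} (hr : ribRel C (Sum.inl (s, i)) (Sum.inr (t, j))) :
    (nodeDepth (s.1 : ℕ), nodeDepth (t.1 : ℕ)) ∈ Nset ℓ := hr.2.1

/-- For every `ℓ ≥ 1`, if `uw` is an edge of `G_ℓ` with `τ(u) > τ(w)`, then `uw`
is a tree edge and `τ(u) = τ(w) + 1`; if moreover `depth(w) ≥ depth(u)`, then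
`π(u)` is a source and `u` is a vertex of the clique `K^{π(u)}`. -/
theorem statement11 :
    ∀ ℓ : ℕ, 1 ≤ ℓ → ∀ C : GChoices ℓ, ∀ u w : BV (h ℓ),
      (Gl C).Adj u w → tau ℓ w < tau ℓ u →
        (IsTreeEdge C u w ∧ tau ℓ u = tau ℓ w + 1) ∧
        (vDepth u ≤ vDepth w →
          IsSource ℓ (πn u) ∧ ∃ sn i, u = Sum.inl (sn, i)) := by
  intro ℓ hℓ C u w hadj hlt
  rw [Gl, SimpleGraph.fromRel_adj] at hadj
  obtain ⟨hne, hR⟩ := hadj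
  rw [tau_eq_taud, tau_eq_taud] at hlt
  rcases u with ⟨s, i⟩ | ⟨t, j⟩ <;> rcases w with ⟨s', i'⟩ | ⟨t', j'⟩
  · -- inl inl
    exfalso
    have hs : s = s' := by
      rcases hR with (hb | hr) | (hb | hr)
      · exact buRel_inl_inl hb
      · exact (ribRel_false_inl_inl hr).elim
      · exact (buRel_inl_inl hb).symm
      · exact (ribRel_false_inl_inl hr).elim
    rw [vDepth_inl, vDepth_inl, hs] at hlt
    omega
  · -- inl inr : u = inl (s,i), w = inr (t',j')
    have hR' : buRel C.toBUChoices (Sum.inl (s,i)) (Sum.inr (t',j')) ∨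
        ribRel C (Sum.inl (s,i)) (Sum.inr (t',j')) := by
      rcases hR with hx | (hb | hr)
      · exact hx
      · exact (buRel_false_inr_inl hb).elim
      · exact (ribRel_false_inr_inl hr).elim
    rw [vDepth_inl, vDepth_inr] at hlt
    rcases hR' with hbu | hrib
    · rcases buRel_inl_inr hbu with hdiv | heq
      · have ht2 : 2 ≤ (t'.1 : ℕ) := t'.2
        have hdepth : nodeDepth ((s.1 : ℕ)) + 1 = nodeDepth ((t'.1 : ℕ)) := by
          rw [hdiv]; exact nodeDepth_parent ht2
        rw [← hdepth] at hlt
        have hlip := taud_lip ℓ hℓ (nodeDepth ((s.1 : ℕ)))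
        refine ⟨⟨⟨?_, ?_⟩, ?_⟩, ?_⟩
        · rw [blowup, SimpleGraph.fromRel_adj]
          exact ⟨hne, Or.inl hbu⟩
        · rintro ⟨s₀, i₀, j₀, h1, h2⟩
          exact absurd h2 (by simp)
        · rw [tau_eq_taud, tau_eq_taud, vDepth_inl, vDepth_inr, ← hdepth]
          omega
        · intro _
          obtain ⟨y, hy⟩ := taud_drop ℓ hℓ _ hlt
          exact ⟨⟨⟨s.2, s.1.2⟩, y, hy⟩, s, i, rfl⟩
      · exfalso
        rw [heq] at hlt
        omega
    · exfalso
      have hmem := ribRel_inl_inr_mem hrib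
      have := taud_nset ℓ hℓ _ _ hmem
      omega
  · -- inr inl : u = inr (t,j), w = inl (s',i')
    have hR' : buRel C.toBUChoices (Sum.inl (s',i')) (Sum.inr (t,j)) ∨
        ribRel C (Sum.inl (s',i')) (Sum.inr (t,j)) := by
      rcases hR with (hb | hr) | hx
      · exact (buRel_false_inr_inl hb).elim
      · exact (ribRel_false_inr_inl hr).elim
      · exact hx
    rw [vDepth_inr, vDepth_inl] at hlt
    rcases hR' with hbu | hrib
    · rcases buRel_inl_inr hbu with hdiv | heq
      · have ht2 : 2 ≤ (t.1 : ℕ) := t.2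
        have hdepth : nodeDepth ((s'.1 : ℕ)) + 1 = nodeDepth ((t.1 : ℕ)) := by
          rw [hdiv]; exact nodeDepth_parent ht2
        rw [← hdepth] at hlt
        have hlip := taud_lip ℓ hℓ (nodeDepth ((s'.1 : ℕ)))
        refine ⟨⟨⟨?_, ?_⟩, ?_⟩, ?_⟩
        · rw [blowup, SimpleGraph.fromRel_adj]
          exact ⟨hne, Or.inr hbu⟩
        · rintro ⟨s₀, i₀, j₀, h1, h2⟩
          exact absurd h1 (by simp)
        · rw [tau_eq_taud, tau_eq_taud, vDepth_inr, vDepth_inl, ← hdepth]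
          omega
        · intro hde
          rw [vDepth_inr, vDepth_inl, ← hdepth] at hde
          exact absurd hde (by omega)
      · exfalso
        rw [heq] at hlt
        omega
    · exfalso
      have hmem := ribRel_inl_inr_mem hrib
      have := taud_nset ℓ hℓ _ _ hmem
      omega
  · -- inr inr
    exfalso
    have ht : t = t' := by
      rcases hR with (hb | hr) | (hb | hr)
      · exact buRel_inr_inr hb
      · exact (ribRel_false_inr_inr hr).elim
      · exact (buRel_inr_inr hb).symm
      · exact (ribRel_false_inr_inr hr).elim
    rw [vDepth_inr, vDepth_inr, ht] at hlt
    omega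


end PaperDefs
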